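/- Bound on the reaction terms: Let κ_p, λ_p, λ_q, μ_pq > 0 with Υ := κ_p·μ_pq - λ_p·λ_q > 0, and set E_p := κ_p/λ_p, E_q := Υ/(λ_q·μ_pq). Define f_p(p,q) := -p(λ_p + μ_pq·q) + κ_p, f_q(p,q) := -q(λ_q - μ_pq·p), s_p'(p) := log(p/(E_p - p)), s_q'(q) := log(q/E_q), and s_q(q) := q(log(q/E_q) - 1) + E_q. Then for all p, q with 0 < p < E_p and q > 0, f_p(p,q)·s_p'(p) + f_q(p,q)·s_q'(q) ≤ C_f·(E_q + s_q(q)), where C_f := ((1 + log 2)/log 2)·E_p·(λ_p/E_q + 2·μ_pq). -/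

import Mathlib

/-!
Split `f_p s_p'` as `λ_p (E_p - p) log (p / (E_p - p)) + μ_pq q · (-p log (p / (E_p - p)))`;
both `x log (y / x) ≤ y - x` bounds give at most `λ_p E_p + μ_pq E_p q`. Likewise
`f_q s_q' = (μ_pq p - λ_q) (s_q + q - E_q) ≤ μ_pq E_p (q + s_q) + λ_q E_q`, and `λ_q E_q ≤ κ_p = λ_p E_p`.
The linear growth in `q` is absorbed by the Fenchel–Young inequality `q log 2 ≤ E_q + s_q`,
which is where the factor `(1 + log 2) / log 2` comes from.
-/

open Real

/-- The paper's `s_q` with `E = E_q`, i.e. `E * klFun (q / E)`. -/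
noncomputable def entropyDensity (E q : ℝ) : ℝ := q * (log (q / E) - 1) + E

lemma mul_log_div_le_sub {x y : ℝ} (hx : 0 < x) (hy : 0 < y) : x * log (y / x) ≤ y - x := by
  calc x * log (y / x) ≤ x * (y / x - 1) := by gcongr; exact log_le_sub_one_of_pos (by positivity)
    _ = y - x := by field_simp

lemma mul_log_le_entropyDensity_add {E q a : ℝ} (hE : 0 < E) (hq : 0 < q) (ha : 0 < a) :
    q * log a ≤ entropyDensity E q + (a - 1) * E := by
  have h := mul_log_div_le_sub hq (mul_pos ha hE)
  rw [show a * E / q = a / (q / E) by field_simp, log_div ha.ne' (by positivity)] at h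
  unfold entropyDensity
  linarith

lemma entropyDensity_nonneg {E q : ℝ} (hE : 0 < E) (hq : 0 < q) : 0 ≤ entropyDensity E q := by
  simpa using mul_log_le_entropyDensity_add hE hq one_pos

lemma sub_mul_log_div_sub_le {p E : ℝ} (hp : 0 < p) (hpE : p < E) :
    (E - p) * log (p / (E - p)) ≤ E := by
  linarith [mul_log_div_le_sub (sub_pos.2 hpE) hp]

lemma neg_mul_log_div_sub_le {p E : ℝ} (hp : 0 < p) (hpE : p < E) :
    -(p * log (p / (E - p))) ≤ E := by
  have h := mul_log_div_le_sub hp (sub_pos.2 hpE)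
  rw [← inv_div, log_inv] at h
  linarith

lemma reaction_p_mul_log_le {lp μ E p q : ℝ} (hlp : 0 ≤ lp) (hμ : 0 ≤ μ) (hq : 0 ≤ q)
    (hp : 0 < p) (hpE : p < E) :
    (-(p * (lp + μ * q)) + lp * E) * log (p / (E - p)) ≤ lp * E + μ * q * E := by
  have h₁ := mul_le_mul_of_nonneg_left (sub_mul_log_div_sub_le hp hpE) hlp
  have h₂ := mul_le_mul_of_nonneg_left (neg_mul_log_div_sub_le hp hpE) (mul_nonneg hμ hq)
  linarith

lemma reaction_q_mul_log_le {lq μ Ep Eq p q : ℝ} (hlq : 0 ≤ lq) (hμ : 0 ≤ μ) (hp : 0 ≤ p)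
    (hpE : p ≤ Ep) (hEq : 0 < Eq) (hq : 0 < q) :
    -(q * (lq - μ * p)) * log (q / Eq) ≤ μ * Ep * (q + entropyDensity Eq q) + lq * Eq := by
  have hlog : q * log (q / Eq) = entropyDensity Eq q + q - Eq := by unfold entropyDensity; ring
  have hs := entropyDensity_nonneg hEq hq
  have hcoef : μ * p - lq ≤ μ * Ep := by linarith [mul_le_mul_of_nonneg_left hpE hμ]
  calc -(q * (lq - μ * p)) * log (q / Eq)
      = (μ * p - lq) * (q + entropyDensity Eq q) + (lq - μ * p) * Eq := by
        linear_combination (μ * p - lq) * hlog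
    _ ≤ μ * Ep * (q + entropyDensity Eq q) + lq * Eq := by
      linarith [mul_le_mul_of_nonneg_right hcoef (add_nonneg hq.le hs),
        mul_nonneg (mul_nonneg hμ hp) hEq.le]

lemma two_le_one_add_log_two_div_log_two : 2 ≤ (1 + log 2) / log 2 := by
  rw [le_div_iff₀ (log_pos one_lt_two)]
  linarith [log_two_lt_d9]

lemma add_entropyDensity_le {E q : ℝ} (hE : 0 < E) (hq : 0 < q) :
    q + entropyDensity E q ≤ (1 + log 2) / log 2 * (E + entropyDensity E q) := by
  have h := mul_log_le_entropyDensity_add hE hq two_pos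
  have hs := entropyDensity_nonneg hE hq
  have hlog : 0 < log 2 := log_pos one_lt_two
  rw [div_mul_eq_mul_div, le_div_iff₀ hlog]
  nlinarith

lemma reaction_terms_le {lp lq μ Ep Eq p q : ℝ} (hlp : 0 ≤ lp) (hlq : 0 ≤ lq) (hμ : 0 ≤ μ)
    (hEq : 0 < Eq) (hp : 0 < p) (hpE : p < Ep) (hq : 0 < q) (hE : lq * Eq ≤ lp * Ep) :
    (-(p * (lp + μ * q)) + lp * Ep) * log (p / (Ep - p)) +
        -(q * (lq - μ * p)) * log (q / Eq) ≤
      (1 + log 2) / log 2 * Ep * (lp / Eq + 2 * μ) * (Eq + entropyDensity Eq q) := by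
  set c := (1 + log 2) / log 2
  set s := entropyDensity Eq q
  have hEp : 0 < Ep := hp.trans hpE
  have hs : 0 ≤ s := entropyDensity_nonneg hEq hq
  have hc : 2 ≤ c := two_le_one_add_log_two_div_log_two
  have hqs : q + s ≤ c * (Eq + s) := add_entropyDensity_le hEq hq
  have hlp_le : lp ≤ lp / Eq * (Eq + s) := by
    rw [div_mul_eq_mul_div, le_div_iff₀ hEq]
    nlinarith
  calc (-(p * (lp + μ * q)) + lp * Ep) * log (p / (Ep - p)) +
        -(q * (lq - μ * p)) * log (q / Eq)
      ≤ (lp * Ep + μ * q * Ep) + (μ * Ep * (q + s) + lq * Eq) :=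
        add_le_add (reaction_p_mul_log_le hlp hμ hq.le hp hpE)
          (reaction_q_mul_log_le hlq hμ hp.le hpE.le hEq hq)
    _ ≤ Ep * (2 * lp + 2 * μ * (q + s)) := by linarith [mul_nonneg (mul_nonneg hμ hEp.le) hs]
    _ ≤ Ep * (c * (lp / Eq * (Eq + s)) + 2 * μ * (c * (Eq + s))) := by gcongr
    _ = c * Ep * (lp / Eq + 2 * μ) * (Eq + s) := by ring

theorem reaction_term_bound_general
    (κp lp lq μpq : ℝ)
    (hlp : 0 < lp) (hlq : 0 < lq) (hμ : 0 < μpq)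
    (hΥ : 0 < κp * μpq - lp * lq)
    (p q : ℝ) (hp0 : 0 < p) (hpE : p < κp / lp) (hq : 0 < q) :
    (-(p * (lp + μpq * q)) + κp) * Real.log (p / (κp / lp - p)) +
      (-(q * (lq - μpq * p))) * Real.log (q / ((κp * μpq - lp * lq) / (lq * μpq))) ≤
    ((1 + Real.log 2) / Real.log 2) * (κp / lp) *
        (lp / ((κp * μpq - lp * lq) / (lq * μpq)) + 2 * μpq) *
      ((κp * μpq - lp * lq) / (lq * μpq) +
        (q * (Real.log (q / ((κp * μpq - lp * lq) / (lq * μpq))) - 1) +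
          (κp * μpq - lp * lq) / (lq * μpq))) := by
  have hκp : lp * (κp / lp) = κp := mul_div_cancel₀ κp hlp.ne'
  have hEq : 0 < (κp * μpq - lp * lq) / (lq * μpq) := by positivity
  have hE : lq * ((κp * μpq - lp * lq) / (lq * μpq)) ≤ lp * (κp / lp) := by
    rw [hκp, mul_div_assoc', div_le_iff₀ (by positivity)]
    nlinarith [mul_pos (mul_pos hlp hlq) hlq]
  have h := reaction_terms_le hlp.le hlq.le hμ.le hEq hp0 hpE hq hE
  rw [hκp] at h
  exact h

/-- Bound on the reaction terms of the two-state conformational conversion system. -/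
theorem reaction_term_bound
    (κp lp lq μpq : ℝ)
    (hκ : 0 < κp) (hlp : 0 < lp) (hlq : 0 < lq) (hμ : 0 < μpq)
    (hΥ : 0 < κp * μpq - lp * lq)
    (p q : ℝ) (hp0 : 0 < p) (hpE : p < κp / lp) (hq : 0 < q) :
    (-(p * (lp + μpq * q)) + κp) * Real.log (p / (κp / lp - p)) +
      (-(q * (lq - μpq * p))) * Real.log (q / ((κp * μpq - lp * lq) / (lq * μpq))) ≤
    ((1 + Real.log 2) / Real.log 2) * (κp / lp) *
        (lp / ((κp * μpq - lp * lq) / (lq * μpq)) + 2 * μpq) *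
      ((κp * μpq - lp * lq) / (lq * μpq) +
        (q * (Real.log (q / ((κp * μpq - lp * lq) / (lq * μpq))) - 1) +
          (κp * μpq - lp * lq) / (lq * μpq))) :=
  reaction_term_bound_general κp lp lq μpq hlp hlq hμ hΥ p q hp0 hpE hq
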